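/- Under Assumption (A), let X_t(x) = (q_t(x), p_t(x)) solve the zero-noise underdamped dynamics with X_0(x) = x, let A(q) = [[0, I_d],[−DF(q), −γ I_d]], and let Σ_t(x) solve dΣ_t/dt = J + A(q_t(x)) Σ_t + Σ_t A(q_t(x))ᵀ with Σ_0 = 0. For x = (q, p) define the 2d×2d block matrix Σ̂_t(x) = [[ (t³/3) I_d , (t²/2 − γ t³/2) I_d ],[ (t²/2 − γ t³/2) I_d , (t − γ t² + (2/3) γ² t³) I_d − (t³/6)(DF(q) + DF(q)ᵀ) ]]. Then for every r > 0 there exist constants C(r) > 0 and t₀ > 0 such that for all x with |x| ≤ r and all t ∈ (0, t₀], ‖Σ_t(x) − Σ̂_t(x)‖_F ≤ C(r) t⁴. -/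

import Mathlib

open Matrix

set_option linter.unusedSectionVars false
set_option linter.unusedVariables false
set_option maxHeartbeats 1000000
set_option synthInstance.maxHeartbeats 400000

namespace Stmt17Aux
noncomputable section

variable {m : Type*} [Fintype m] [DecidableEq m]

/-- Vectorization of a matrix into Euclidean space. -/
def vecE (M : Matrix m m ℝ) : EuclideanSpace ℝ (m × m) :=
  (WithLp.equiv 2 ((m × m) → ℝ)).symm (fun ij => M ij.1 ij.2)

lemma vecE_apply (M : Matrix m m ℝ) (ij : m × m) : vecE M ij = M ij.1 ij.2 := rfl

lemma vecE_add (M N : Matrix m m ℝ) : vecE (M + N) = vecE M + vecE N := rfl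

lemma vecE_smul (c : ℝ) (M : Matrix m m ℝ) : vecE (c • M) = c • vecE M := rfl

lemma vecE_zero : vecE (0 : Matrix m m ℝ) = 0 := rfl

lemma vecE_norm (M : Matrix m m ℝ) :
    ‖vecE M‖ = Real.sqrt (∑ i, ∑ j, (M i j) ^ 2) := by
  rw [EuclideanSpace.norm_eq, Fintype.sum_prod_type]
  simp only [vecE, Real.norm_eq_abs, sq_abs]; rfl

lemma abs_coord_le {n : Type*} [Fintype n] (x : EuclideanSpace ℝ n) (i : n) : |x i| ≤ ‖x‖ := by
  rw [EuclideanSpace.norm_eq]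
  have h1 : ‖x i‖ ^ 2 ≤ ∑ j, ‖x j‖ ^ 2 :=
    Finset.single_le_sum (f := fun j => ‖x j‖ ^ 2) (fun j _ => sq_nonneg _) (Finset.mem_univ i)
  calc |x i| = Real.sqrt (‖x i‖ ^ 2) := by
        rw [Real.sqrt_sq_eq_abs, Real.norm_eq_abs, abs_abs]
    _ ≤ _ := Real.sqrt_le_sqrt h1

lemma vecE_norm_le (M : Matrix m m ℝ) {c : ℝ} (hc : 0 ≤ c) (h : ∀ i j, |M i j| ≤ c) :
    ‖vecE M‖ ≤ (Fintype.card m : ℝ) * c := by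
  rw [vecE_norm]
  have hsum : ∑ i, ∑ j, (M i j) ^ 2 ≤ ((Fintype.card m : ℝ) * c) ^ 2 := by
    calc ∑ i, ∑ j, (M i j) ^ 2 ≤ ∑ _i : m, ∑ _j : m, c ^ 2 := by
          refine Finset.sum_le_sum fun i _ => Finset.sum_le_sum fun j _ => ?_
          calc (M i j) ^ 2 = |M i j| ^ 2 := (sq_abs _).symm
            _ ≤ c ^ 2 := pow_le_pow_left₀ (abs_nonneg _) (h i j) 2
      _ = (Fintype.card m : ℝ) * ((Fintype.card m : ℝ) * c ^ 2) := by
          simp [Finset.sum_const, Finset.card_univ, mul_assoc]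
      _ = ((Fintype.card m : ℝ) * c) ^ 2 := by ring
  calc Real.sqrt (∑ i, ∑ j, (M i j) ^ 2) ≤ Real.sqrt (((Fintype.card m : ℝ) * c) ^ 2) :=
        Real.sqrt_le_sqrt hsum
    _ = (Fintype.card m : ℝ) * c := Real.sqrt_sq (by positivity)

lemma vecE_norm_transpose (M : Matrix m m ℝ) : ‖vecE Mᵀ‖ = ‖vecE M‖ := by
  rw [vecE_norm, vecE_norm, Finset.sum_comm]
  simp [Matrix.transpose_apply]

lemma vecE_norm_mul_le (A B : Matrix m m ℝ) {c : ℝ} (hc : 0 ≤ c) (h : ∀ i j, |A i j| ≤ c) :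
    ‖vecE (A * B)‖ ≤ (Fintype.card m : ℝ) * c * ‖vecE B‖ := by
  rw [vecE_norm, vecE_norm]
  set n : ℝ := (Fintype.card m : ℝ) with hn
  have hn0 : (0:ℝ) ≤ n := Nat.cast_nonneg _
  have key : ∑ i, ∑ j, ((A * B) i j) ^ 2 ≤ (n * c) ^ 2 * ∑ i, ∑ j, (B i j) ^ 2 := by
    have hA : ∀ i, ∑ k, (A i k) ^ 2 ≤ n * c ^ 2 := by
      intro i
      calc ∑ k, (A i k) ^ 2 ≤ ∑ _k : m, c ^ 2 :=
            Finset.sum_le_sum fun k _ => by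
              calc (A i k) ^ 2 = |A i k| ^ 2 := (sq_abs _).symm
                _ ≤ c ^ 2 := pow_le_pow_left₀ (abs_nonneg _) (h i k) 2
        _ = n * c ^ 2 := by simp [Finset.sum_const, Finset.card_univ, hn]
    calc ∑ i, ∑ j, ((A * B) i j) ^ 2
        ≤ ∑ i, ∑ j, (∑ k, (A i k) ^ 2) * (∑ k, (B k j) ^ 2) := by
          refine Finset.sum_le_sum fun i _ => Finset.sum_le_sum fun j _ => ?_
          rw [Matrix.mul_apply]
          exact Finset.sum_mul_sq_le_sq_mul_sq _ _ _
      _ ≤ ∑ _i : m, ∑ j, (n * c ^ 2) * (∑ k, (B k j) ^ 2) := by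
          refine Finset.sum_le_sum fun i _ => Finset.sum_le_sum fun j _ => ?_
          exact mul_le_mul_of_nonneg_right (hA i)
            (Finset.sum_nonneg fun k _ => sq_nonneg _)
      _ = n * ((n * c ^ 2) * ∑ j, ∑ k, (B k j) ^ 2) := by
          rw [Finset.sum_const, Finset.card_univ, ← Finset.mul_sum, nsmul_eq_mul]
      _ = (n * c) ^ 2 * ∑ i, ∑ j, (B i j) ^ 2 := by
          rw [Finset.sum_comm]; ring
  calc Real.sqrt (∑ i, ∑ j, ((A * B) i j) ^ 2)
      ≤ Real.sqrt ((n * c) ^ 2 * ∑ i, ∑ j, (B i j) ^ 2) := Real.sqrt_le_sqrt key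
    _ = (n * c) * Real.sqrt (∑ i, ∑ j, (B i j) ^ 2) := by
        rw [Real.sqrt_mul (sq_nonneg _), Real.sqrt_sq (by positivity)]

lemma abs_mul_le' {a x A X : ℝ} (h1 : |a| ≤ A) (h2 : |x| ≤ X) : |a * x| ≤ A * X := by
  rw [abs_mul]
  exact mul_le_mul h1 h2 (abs_nonneg _) ((abs_nonneg a).trans h1)

lemma exp_sub_one_le' {x : ℝ} (hx : 0 ≤ x) : Real.exp x - 1 ≤ x * Real.exp x := by
  have h1 : Real.exp (-x) * Real.exp x = 1 := by rw [← Real.exp_add]; simp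
  have h2 : -x + 1 ≤ Real.exp (-x) := Real.add_one_le_exp _
  nlinarith [Real.exp_pos x, mul_le_mul_of_nonneg_right h2 (Real.exp_pos x).le]

lemma gronwall_zero {E : Type*} [NormedAddCommGroup E] [NormedSpace ℝ E]
    {f f' : ℝ → E} {K ε b : ℝ} (hK : 0 < K) (hε : 0 ≤ ε) (hb : 0 ≤ b)
    (hf : ∀ t, HasDerivAt f (f' t) t) (h0 : ‖f 0‖ ≤ 0)
    (bound : ∀ s ∈ Set.Ico (0:ℝ) b, ‖f' s‖ ≤ K * ‖f s‖ + ε) :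
    ‖f b‖ ≤ ε * b * Real.exp (K * b) := by
  have hcont : ContinuousOn f (Set.Icc 0 b) := fun x _ => ((hf x).continuousAt).continuousWithinAt
  have h := norm_le_gronwallBound_of_norm_deriv_right_le hcont
    (fun x _ => (hf x).hasDerivWithinAt) h0 bound b (Set.right_mem_Icc.2 hb)
  rw [sub_zero, gronwallBound_of_K_ne_0 hK.ne'] at h
  have h1 : Real.exp (K * b) - 1 ≤ (K * b) * Real.exp (K * b) :=
    exp_sub_one_le' (by positivity)
  have h2 : ε / K * (Real.exp (K * b) - 1) ≤ ε / K * ((K * b) * Real.exp (K * b)) :=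
    mul_le_mul_of_nonneg_left h1 (by positivity)
  have h3 : ε / K * ((K * b) * Real.exp (K * b)) = ε * b * Real.exp (K * b) := by
    field_simp
  calc ‖f b‖ ≤ 0 * Real.exp (K * b) + ε / K * (Real.exp (K * b) - 1) := h
    _ ≤ ε * b * Real.exp (K * b) := by rw [zero_mul, zero_add]; rw [h3] at h2; linarith

lemma stay_close {E : Type*} [NormedAddCommGroup E] [NormedSpace ℝ E]
    {g g' : ℝ → E} (hg : ∀ t, HasDerivAt g (g' t) t) {L t₀ : ℝ} (hL : 0 < L)
    (hsmall : L * t₀ ≤ 1/2)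
    (hbd : ∀ s, s ∈ Set.Icc (0:ℝ) t₀ → ‖g s - g 0‖ ≤ 1 → ‖g' s‖ ≤ L) :
    ∀ t ∈ Set.Icc (0:ℝ) t₀, ‖g t - g 0‖ ≤ L * t := by
  have hgc : Continuous g := continuous_iff_continuousAt.2 fun x => (hg x).continuousAt
  have hφc : Continuous (fun t => ‖g t - g 0‖) := (hgc.sub continuous_const).norm
  have mvt : ∀ u ∈ Set.Icc (0:ℝ) t₀, (∀ s ∈ Set.Icc (0:ℝ) u, ‖g s - g 0‖ ≤ 1) →
      ‖g u - g 0‖ ≤ L * u := by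
    intro u hu hsm
    have h := Convex.norm_image_sub_le_of_norm_hasDerivWithin_le
      (f := g) (f' := g') (s := Set.Icc (0:ℝ) u) (C := L)
      (fun x hx => (hg x).hasDerivWithinAt)
      (fun x hx => hbd x ⟨hx.1, hx.2.trans hu.2⟩ (hsm x hx))
      (convex_Icc _ _) (Set.left_mem_Icc.2 hu.1) (Set.right_mem_Icc.2 hu.1)
    simpa [Real.norm_eq_abs, abs_of_nonneg hu.1] using h
  have claim : ∀ t ∈ Set.Icc (0:ℝ) t₀, ‖g t - g 0‖ ≤ 1 := by
    by_contra hcon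
    push_neg at hcon
    obtain ⟨t₂, ht₂, ht₂'⟩ := hcon
    set Kset : Set ℝ := {t | t ∈ Set.Icc (0:ℝ) t₀ ∧ 1 ≤ ‖g t - g 0‖} with hKset
    have hKne : Kset.Nonempty := ⟨t₂, ht₂, ht₂'.le⟩
    have hKcl : IsClosed Kset := by
      have : Kset = Set.Icc (0:ℝ) t₀ ∩ {t | 1 ≤ ‖g t - g 0‖} := by
        ext t; simp [hKset, Set.mem_setOf_eq, Set.mem_inter_iff]
      rw [this]
      exact isClosed_Icc.inter (isClosed_le continuous_const hφc)
    have hKbdd : BddBelow Kset := ⟨0, fun t ht => ht.1.1⟩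
    set t₁ := sInf Kset with ht₁
    have ht₁K : t₁ ∈ Kset := hKcl.csInf_mem hKne hKbdd
    have ht₁pos : 0 < t₁ := by
      rcases lt_or_eq_of_le ht₁K.1.1 with h | h
      · exact h
      · exfalso; have := ht₁K.2; rw [← h] at this; simp at this; linarith
    have hlt : ∀ s ∈ Set.Ico (0:ℝ) t₁, ‖g s - g 0‖ ≤ 1 := by
      intro s hs
      by_contra hc
      push_neg at hc
      have : s ∈ Kset := ⟨⟨hs.1, hs.2.le.trans ht₁K.1.2⟩, hc.le⟩
      exact absurd (csInf_le hKbdd this) (not_le.2 hs.2)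
    have hφt₁ : ‖g t₁ - g 0‖ ≤ 1 := by
      have hmem : t₁ ∈ closure (Set.Ico (0:ℝ) t₁) := by
        rw [closure_Ico ht₁pos.ne]
        exact ⟨ht₁pos.le, le_refl _⟩
      haveI : (nhdsWithin t₁ (Set.Ico (0:ℝ) t₁)).NeBot :=
        mem_closure_iff_nhdsWithin_neBot.1 hmem
      refine le_of_tendsto (hφc.continuousWithinAt :
        ContinuousWithinAt (fun t => ‖g t - g 0‖) (Set.Ico (0:ℝ) t₁) t₁) ?_
      exact eventually_nhdsWithin_of_forall hlt
    have hmvt := mvt t₁ ht₁K.1 (fun s hs => by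
      rcases lt_or_eq_of_le hs.2 with h | h
      · exact hlt s ⟨hs.1, h⟩
      · rw [h]; exact hφt₁)
    have h1 : (1:ℝ) ≤ L * t₁ := le_trans ht₁K.2 hmvt
    have h2 : L * t₁ ≤ L * t₀ := mul_le_mul_of_nonneg_left ht₁K.1.2 hL.le
    linarith
  intro t ht
  exact mvt t ht fun s hs => claim s ⟨hs.1, hs.2.trans ht.2⟩

variable {n : Type*} [Fintype n] [DecidableEq n]

def C1 : Matrix (n ⊕ n) (n ⊕ n) ℝ := fromBlocks 0 0 0 1

def C2 (γ : ℝ) : Matrix (n ⊕ n) (n ⊕ n) ℝ :=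
  fromBlocks 0 ((1/2 : ℝ) • 1) ((1/2 : ℝ) • 1) (-(γ • 1))

def C3 (γ : ℝ) (D : Matrix n n ℝ) : Matrix (n ⊕ n) (n ⊕ n) ℝ :=
  fromBlocks ((1/3 : ℝ) • 1) ((-(γ/2)) • 1) ((-(γ/2)) • 1)
    ((2/3*γ^2) • 1 - (1/6 : ℝ) • (D + Dᵀ))

def E0c (γ : ℝ) (D : Matrix n n ℝ) : Matrix (n ⊕ n) (n ⊕ n) ℝ :=
  fromBlocks (-(γ • 1))
    ((7/6*γ^2) • 1 - (1/6 : ℝ) • D - (1/2 : ℝ) • Dᵀ)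
    ((7/6*γ^2) • 1 - (1/2 : ℝ) • D - (1/6 : ℝ) • Dᵀ)
    ((-(4/3*γ^3)) • 1 + (5/6*γ) • (D + Dᵀ))

def DeltaM (γ s : ℝ) (E : Matrix n n ℝ) : Matrix (n ⊕ n) (n ⊕ n) ℝ :=
  fromBlocks 0 (-((s^3/3) • Eᵀ)) (-((s^3/3) • E))
    (-((s^2/2 - γ*s^3/2) • (E + Eᵀ)))

lemma poly_eq (γ s : ℝ) (D : Matrix n n ℝ) :
    (fromBlocks ((s ^ 3 / 3) • 1) ((s ^ 2 / 2 - γ * s ^ 3 / 2) • 1)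
      ((s ^ 2 / 2 - γ * s ^ 3 / 2) • 1)
      ((s - γ * s ^ 2 + (2 / 3) * γ ^ 2 * s ^ 3) • 1
        - (s ^ 3 / 6) • (D + Dᵀ)) : Matrix (n ⊕ n) (n ⊕ n) ℝ)
    = s • C1 + s^2 • C2 γ + s^3 • C3 γ D := by
  simp only [C1, C2, C3, Matrix.fromBlocks_smul, Matrix.fromBlocks_add, smul_zero]
  rw [Matrix.fromBlocks_inj]
  refine ⟨?_, ?_, ?_, ?_⟩ <;> (match_scalars <;> ring)

lemma key_eq (γ s : ℝ) (D D' : Matrix n n ℝ) :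
    fromBlocks 0 0 0 1
      + (fromBlocks 0 1 (-D') (-(γ • 1)))
        * (fromBlocks ((s ^ 3 / 3) • 1) ((s ^ 2 / 2 - γ * s ^ 3 / 2) • 1)
            ((s ^ 2 / 2 - γ * s ^ 3 / 2) • 1)
            ((s - γ * s ^ 2 + (2 / 3) * γ ^ 2 * s ^ 3) • 1 - (s ^ 3 / 6) • (D + Dᵀ)))
      + (fromBlocks ((s ^ 3 / 3) • 1) ((s ^ 2 / 2 - γ * s ^ 3 / 2) • 1)
            ((s ^ 2 / 2 - γ * s ^ 3 / 2) • 1)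
            ((s - γ * s ^ 2 + (2 / 3) * γ ^ 2 * s ^ 3) • 1 - (s ^ 3 / 6) • (D + Dᵀ)))
        * (fromBlocks 0 1 (-D') (-(γ • 1)))ᵀ
      - (C1 + (2*s) • C2 γ + (3*s^2) • C3 γ D)
    = s^3 • E0c γ D + DeltaM γ s (D' - D) := by
  simp only [C1, C2, C3, E0c, DeltaM, Matrix.fromBlocks_transpose, Matrix.fromBlocks_multiply,
    Matrix.fromBlocks_smul, Matrix.fromBlocks_add, sub_eq_add_neg, Matrix.fromBlocks_neg,
    transpose_zero, transpose_one, transpose_neg, transpose_smul, transpose_add,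
    Matrix.mul_smul, Matrix.smul_mul, Matrix.mul_one, Matrix.one_mul, Matrix.neg_mul,
    Matrix.mul_neg, Matrix.zero_mul, Matrix.mul_zero, smul_zero, smul_neg, neg_neg,
    Matrix.add_mul, Matrix.mul_add, smul_add, smul_smul]
  rw [Matrix.fromBlocks_inj]
  refine ⟨?_, ?_, ?_, ?_⟩ <;> (match_scalars <;> ring)

lemma E0c_entry_le {γ MD : ℝ} (hγ : 0 ≤ γ) (hMD : 0 ≤ MD) (D : Matrix n n ℝ)
    (hD : ∀ i j, |D i j| ≤ MD) (i j : n ⊕ n) :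
    |E0c γ D i j| ≤ γ + 2*γ^2 + 2*γ^3 + MD + 2*γ*MD + 1 := by
  rcases i with i | i <;> rcases j with j | j <;>
    simp only [E0c, fromBlocks_apply₁₁, fromBlocks_apply₁₂, fromBlocks_apply₂₁,
      fromBlocks_apply₂₂, Matrix.sub_apply, Matrix.add_apply, Matrix.smul_apply,
      Matrix.neg_apply, Matrix.one_apply, Matrix.transpose_apply, smul_eq_mul]
  all_goals try split_ifs
  all_goals
    rw [abs_le]; constructor <;>
      nlinarith [abs_le.1 (hD i j), abs_le.1 (hD j i), hγ, hMD, sq_nonneg γ,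
        mul_nonneg hγ hMD, mul_nonneg (mul_nonneg hγ hγ) hγ, mul_nonneg hγ hγ,
        mul_le_mul_of_nonneg_left (abs_le.1 (hD i j)).2 hγ,
        mul_le_mul_of_nonneg_left (abs_le.1 (hD j i)).2 hγ,
        mul_le_mul_of_nonneg_left (abs_le.1 (hD i j)).1 hγ,
        mul_le_mul_of_nonneg_left (abs_le.1 (hD j i)).1 hγ]

lemma A_entry_le {γ MD : ℝ} (hγ : 0 ≤ γ) (hMD : 0 ≤ MD) (D' : Matrix n n ℝ)
    (hD : ∀ i j, |D' i j| ≤ MD) (i j : n ⊕ n) :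
    |(fromBlocks 0 1 (-D') (-(γ • 1)) : Matrix (n ⊕ n) (n ⊕ n) ℝ) i j| ≤ 1 + γ + MD := by
  rcases i with i | i <;> rcases j with j | j <;>
    simp only [fromBlocks_apply₁₁, fromBlocks_apply₁₂, fromBlocks_apply₂₁,
      fromBlocks_apply₂₂, Matrix.zero_apply, Matrix.one_apply, Matrix.neg_apply,
      Matrix.smul_apply, smul_eq_mul]
  all_goals try split_ifs
  all_goals rw [abs_le]; constructor <;> nlinarith [abs_le.1 (hD i j), hγ, hMD]

lemma DeltaM_entry_le {γ s c : ℝ} (hγ : 0 ≤ γ) (hs : 0 ≤ s) (hs1 : s ≤ 1) (hc : 0 ≤ c)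
    (E : Matrix n n ℝ) (hE : ∀ i j, |E i j| ≤ c * s) (i j : n ⊕ n) :
    |DeltaM γ s E i j| ≤ (2*(1+γ)*c + 1) * s^3 := by
  have hs3 : (0:ℝ) ≤ s^3 := by positivity
  have hs43 : s^4 ≤ s^3 := pow_le_pow_of_le_one hs hs1 (by norm_num)
  have hrhs : (0:ℝ) ≤ (2*(1+γ)*c + 1) * s^3 := by positivity
  rcases i with i | i <;> rcases j with j | j <;>
    simp only [DeltaM, fromBlocks_apply₁₁, fromBlocks_apply₁₂, fromBlocks_apply₂₁,
      fromBlocks_apply₂₂, Matrix.zero_apply, Matrix.neg_apply, Matrix.smul_apply,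
      Matrix.add_apply, Matrix.transpose_apply, smul_eq_mul, abs_neg, abs_zero]
  · exact hrhs
  · calc |s^3/3 * E j i| ≤ (s^3/3) * (c * s) :=
          abs_mul_le' (by rw [abs_of_nonneg (by positivity)]) (hE j i)
      _ ≤ (2*(1+γ)*c + 1) * s^3 := by nlinarith [mul_nonneg hc hs3]
  · calc |s^3/3 * E i j| ≤ (s^3/3) * (c * s) :=
          abs_mul_le' (by rw [abs_of_nonneg (by positivity)]) (hE i j)
      _ ≤ (2*(1+γ)*c + 1) * s^3 := by nlinarith [mul_nonneg hc hs3]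
  · calc |(s^2/2 - γ*s^3/2) * (E i j + E j i)| ≤ (s^2/2 + γ*s^3/2) * (c*s + c*s) := by
          refine abs_mul_le' ?_ ((abs_add_le _ _).trans (add_le_add (hE i j) (hE j i)))
          calc |s^2/2 - γ*s^3/2| ≤ |s^2/2| + |γ*s^3/2| := abs_sub _ _
            _ = s^2/2 + γ*s^3/2 := by
                rw [abs_of_nonneg (by positivity), abs_of_nonneg (by positivity)]
      _ ≤ (2*(1+γ)*c + 1) * s^3 := by
          nlinarith [mul_nonneg hc hs3, mul_nonneg (mul_nonneg hγ hc) hs3,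
            mul_le_mul_of_nonneg_left hs43 (mul_nonneg hγ hc),
            mul_le_mul_of_nonneg_left (pow_le_pow_of_le_one hs hs1
              (by norm_num : 3 ≤ 4)) hc]

end
end Stmt17Aux

/-- Lemma 6.3, small-time behavior of the covariance matrix.
Under Assumption (A), with `Σ_t(x)` solving `dΣ/dt = J + A(q_t(x))Σ + Σ A(q_t(x))ᵀ`,
`Σ₀ = 0`, and the third-order Taylor approximation `Σ̂_t(x)` (depending on the initial
position `q₀`), for every `r > 0` there are `C(r) > 0` and `t₀ > 0` such that
`‖Σ_t(x) − Σ̂_t(x)‖_F ≤ C(r) t⁴` for `|x| ≤ r` and `t ∈ (0, t₀]`. -/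
theorem stmt17 (d : ℕ) (hd : 1 ≤ d) (γ : ℝ) (hγ : 0 < γ)
    (F : EuclideanSpace ℝ (Fin d) → EuclideanSpace ℝ (Fin d))
    (U : EuclideanSpace ℝ (Fin d) → ℝ)
    (L : EuclideanSpace ℝ (Fin d) → EuclideanSpace ℝ (Fin d))
    (α β : ℝ)
    (hF : ContDiff ℝ 3 F) (hU : ContDiff ℝ 4 U) (hU0 : ∀ q, 0 ≤ U q)
    (hL : ContDiff ℝ 3 L)
    (hdec : ∀ q, F q = gradient U q + L q)
    (hα : 0 < α) (hβ0 : 0 < β) (hβγ : β < γ)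
    (hcoer : ∀ q, (inner ℝ (F q) q : ℝ) ≥ α * (‖q‖ ^ 2 + U q) + ‖L q‖ ^ 2 / β ^ 2)
    (DF : EuclideanSpace ℝ (Fin d) → Matrix (Fin d) (Fin d) ℝ)
    (hDF : ∀ q i j, DF q i j = fderiv ℝ F q (EuclideanSpace.single j 1) i)
    (A : EuclideanSpace ℝ (Fin d) → Matrix (Fin d ⊕ Fin d) (Fin d ⊕ Fin d) ℝ)
    (hA : ∀ q, A q = Matrix.fromBlocks 0 1 (-(DF q)) (-(γ • 1)))
    (J : Matrix (Fin d ⊕ Fin d) (Fin d ⊕ Fin d) ℝ)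
    (hJ : J = Matrix.fromBlocks 0 0 0 1)
    (Shat : EuclideanSpace ℝ (Fin d) → ℝ → Matrix (Fin d ⊕ Fin d) (Fin d ⊕ Fin d) ℝ)
    (hShat : ∀ q₀ t, Shat q₀ t = Matrix.fromBlocks
      ((t ^ 3 / 3) • 1)
      ((t ^ 2 / 2 - γ * t ^ 3 / 2) • 1)
      ((t ^ 2 / 2 - γ * t ^ 3 / 2) • 1)
      ((t - γ * t ^ 2 + (2 / 3) * γ ^ 2 * t ^ 3) • 1
        - (t ^ 3 / 6) • (DF q₀ + (DF q₀)ᵀ))) :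
    ∀ r > (0 : ℝ), ∃ C > (0 : ℝ), ∃ t₀ > (0 : ℝ),
      ∀ (q p : ℝ → EuclideanSpace ℝ (Fin d))
        (S : ℝ → Matrix (Fin d ⊕ Fin d) (Fin d ⊕ Fin d) ℝ),
        Real.sqrt (‖q 0‖ ^ 2 + ‖p 0‖ ^ 2) ≤ r →
        (∀ t : ℝ, HasDerivAt q (p t) t) →
        (∀ t : ℝ, HasDerivAt p (-F (q t) - γ • p t) t) →
        S 0 = 0 →
        (∀ (t : ℝ) (i j), HasDerivAt (fun s => S s i j)
          ((J + A (q t) * S t + S t * (A (q t))ᵀ) i j) t) →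
        ∀ t : ℝ, 0 < t → t ≤ t₀ →
          Real.sqrt (((S t - Shat (q 0) t) * (S t - Shat (q 0) t)ᵀ).trace) ≤ C * t ^ 4 := by
  intro r hr
  classical
  obtain ⟨MF, hMF⟩ := (isCompact_closedBall (0 : EuclideanSpace ℝ (Fin d)) (r+1)).exists_bound_of_continuousOn
    hF.continuous.continuousOn
  have hF1 : ContDiff ℝ 2 (fun x => fderiv ℝ F x) := hF.fderiv_right (by norm_num)
  have hF2 : ContDiff ℝ 1 (fun x => fderiv ℝ (fun y => fderiv ℝ F y) x) :=
    hF1.fderiv_right (by norm_num)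
  obtain ⟨MD, hMD⟩ := (isCompact_closedBall (0 : EuclideanSpace ℝ (Fin d)) (r+1)).exists_bound_of_continuousOn
    hF1.continuous.continuousOn
  obtain ⟨LD, hLD⟩ := (isCompact_closedBall (0 : EuclideanSpace ℝ (Fin d)) (r+1)).exists_bound_of_continuousOn
    (E := EuclideanSpace ℝ (Fin d) →L[ℝ] EuclideanSpace ℝ (Fin d) →L[ℝ] EuclideanSpace ℝ (Fin d))
    hF2.continuous.continuousOn
  have h0mem : (0 : EuclideanSpace ℝ (Fin d)) ∈ Metric.closedBall 0 (r+1) :=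
    Metric.mem_closedBall_self (by linarith)
  have hMF0 : 0 ≤ MF := le_trans (norm_nonneg _) (hMF 0 h0mem)
  have hMD0 : 0 ≤ MD := le_trans (norm_nonneg _) (hMD 0 h0mem)
  have hLD0 : 0 ≤ LD := le_trans (norm_nonneg _) (hLD 0 h0mem)
  -- Lipschitz bound for fderiv F on the ball
  have hlip : ∀ x ∈ Metric.closedBall (0 : EuclideanSpace ℝ (Fin d)) (r+1),
      ∀ y ∈ Metric.closedBall (0 : EuclideanSpace ℝ (Fin d)) (r+1),
      ‖fderiv ℝ F x - fderiv ℝ F y‖ ≤ LD * ‖x - y‖ := by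
    intro x hx y hy
    exact (convex_closedBall _ _).norm_image_sub_le_of_norm_fderiv_le
      (fun z hz => (hF1.differentiable (by norm_num)).differentiableAt) hLD hy hx
  -- entrywise bounds for DF
  have hDFbd : ∀ x ∈ Metric.closedBall (0 : EuclideanSpace ℝ (Fin d)) (r+1),
      ∀ i j, |DF x i j| ≤ MD := by
    intro x hx i j
    rw [hDF]
    calc |fderiv ℝ F x (EuclideanSpace.single j 1) i|
        ≤ ‖fderiv ℝ F x (EuclideanSpace.single j 1)‖ := Stmt17Aux.abs_coord_le _ _
      _ ≤ ‖fderiv ℝ F x‖ * ‖EuclideanSpace.single j (1:ℝ)‖ := (fderiv ℝ F x).le_opNorm _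
      _ = ‖fderiv ℝ F x‖ := by rw [EuclideanSpace.norm_single, norm_one, mul_one]
      _ ≤ MD := hMD x hx
  have hDFlip : ∀ x ∈ Metric.closedBall (0 : EuclideanSpace ℝ (Fin d)) (r+1),
      ∀ y ∈ Metric.closedBall (0 : EuclideanSpace ℝ (Fin d)) (r+1),
      ∀ i j, |DF x i j - DF y i j| ≤ LD * ‖x - y‖ := by
    intro x hx y hy i j
    have heq : DF x i j - DF y i j
        = ((fderiv ℝ F x - fderiv ℝ F y) (EuclideanSpace.single j 1)) i := by
      rw [hDF, hDF]
      simp [ContinuousLinearMap.sub_apply]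
    rw [heq]
    calc |((fderiv ℝ F x - fderiv ℝ F y) (EuclideanSpace.single j 1)) i|
        ≤ ‖(fderiv ℝ F x - fderiv ℝ F y) (EuclideanSpace.single j 1)‖ :=
          Stmt17Aux.abs_coord_le _ _
      _ ≤ ‖fderiv ℝ F x - fderiv ℝ F y‖ * ‖EuclideanSpace.single j (1:ℝ)‖ :=
          (fderiv ℝ F x - fderiv ℝ F y).le_opNorm _
      _ = ‖fderiv ℝ F x - fderiv ℝ F y‖ := by rw [EuclideanSpace.norm_single, norm_one, mul_one]
      _ ≤ LD * ‖x - y‖ := hlip x hx y hy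
  -- constants
  set L0 : ℝ := (r+1) + (MF + γ * (r+1)) + 1 with hL0def
  have hL0pos : 0 < L0 := by rw [hL0def]; nlinarith
  set t₀ : ℝ := min 1 (1/(2*L0)) with ht₀def
  have ht₀pos : 0 < t₀ := lt_min one_pos (by positivity)
  have ht₀le1 : t₀ ≤ 1 := min_le_left _ _
  have hsmall : L0 * t₀ ≤ 1/2 := by
    have h1 : t₀ ≤ 1/(2*L0) := min_le_right _ _
    calc L0 * t₀ ≤ L0 * (1/(2*L0)) := mul_le_mul_of_nonneg_left h1 hL0pos.le
      _ = 1/2 := by field_simp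
  set K1 : ℝ := γ + 2*γ^2 + 2*γ^3 + MD + 2*γ*MD + 1 with hK1def
  set K2 : ℝ := 2*(1+γ)*(LD*L0) + 1 with hK2def
  set N : ℝ := ((d + d : ℕ) : ℝ) with hNdef
  have hNcard : (Fintype.card (Fin d ⊕ Fin d) : ℝ) = N := by
    rw [hNdef]; norm_num [Fintype.card_sum]
  have hN2 : (2:ℝ) ≤ N := by
    rw [hNdef]
    have : (2:ℕ) ≤ d + d := by omega
    exact_mod_cast this
  have hNpos : (0:ℝ) < N := by linarith
  set K4 : ℝ := 1 + γ + MD with hK4def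
  have hK4pos : (0:ℝ) < K4 := by rw [hK4def]; nlinarith
  set KG : ℝ := 2*N*K4 with hKGdef
  have hKGpos : (0:ℝ) < KG := by rw [hKGdef]; positivity
  have hK1pos : (0:ℝ) < K1 := by rw [hK1def]; nlinarith [mul_nonneg hγ.le hMD0, sq_nonneg γ, mul_nonneg (mul_nonneg hγ.le hγ.le) hγ.le]
  have hK2pos : (0:ℝ) < K2 := by rw [hK2def]; nlinarith [mul_nonneg hLD0 hL0pos.le, mul_nonneg hγ.le (mul_nonneg hLD0 hL0pos.le)]
  set Kε : ℝ := N * (K1 + K2) with hKεdef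
  have hKεpos : (0:ℝ) < Kε := by rw [hKεdef]; positivity
  refine ⟨Kε * Real.exp KG, by positivity, t₀, ht₀pos, ?_⟩
  intro q p S hx0 hq hp hS0 hS t ht ht'
  -- initial data bounds
  have hq0r : ‖q 0‖ ≤ r := by
    calc ‖q 0‖ = Real.sqrt (‖q 0‖^2) := (Real.sqrt_sq (norm_nonneg _)).symm
      _ ≤ Real.sqrt (‖q 0‖^2 + ‖p 0‖^2) := Real.sqrt_le_sqrt (by nlinarith [sq_nonneg ‖p 0‖])
      _ ≤ r := hx0
  have hp0r : ‖p 0‖ ≤ r := by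
    calc ‖p 0‖ = Real.sqrt (‖p 0‖^2) := (Real.sqrt_sq (norm_nonneg _)).symm
      _ ≤ Real.sqrt (‖q 0‖^2 + ‖p 0‖^2) := Real.sqrt_le_sqrt (by nlinarith [sq_nonneg ‖q 0‖])
      _ ≤ r := hx0
  -- the combined trajectory stays in the ball
  set g : ℝ → (EuclideanSpace ℝ (Fin d)) × (EuclideanSpace ℝ (Fin d)) :=
    fun s => (q s, p s) with hgdef
  have hg : ∀ s, HasDerivAt g (p s, -F (q s) - γ • p s) s := fun s => (hq s).prodMk (hp s)
  have hstay : ∀ s ∈ Set.Icc (0:ℝ) t₀, ‖g s - g 0‖ ≤ L0 * s := by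
    refine Stmt17Aux.stay_close hg hL0pos hsmall ?_
    intro s hs hclose
    have hq1 : ‖q s - q 0‖ ≤ 1 := le_trans (norm_fst_le (g s - g 0)) hclose
    have hp1 : ‖p s - p 0‖ ≤ 1 := le_trans (norm_snd_le (g s - g 0)) hclose
    have hqs : ‖q s‖ ≤ r + 1 := by
      calc ‖q s‖ = ‖q 0 + (q s - q 0)‖ := by rw [add_sub_cancel]
        _ ≤ ‖q 0‖ + ‖q s - q 0‖ := norm_add_le _ _
        _ ≤ r + 1 := add_le_add hq0r hq1
    have hps : ‖p s‖ ≤ r + 1 := by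
      calc ‖p s‖ = ‖p 0 + (p s - p 0)‖ := by rw [add_sub_cancel]
        _ ≤ ‖p 0‖ + ‖p s - p 0‖ := norm_add_le _ _
        _ ≤ r + 1 := add_le_add hp0r hp1
    rw [Prod.norm_def]
    refine max_le (by rw [hL0def]; nlinarith [hps, hMF0, mul_nonneg hγ.le (by linarith : (0:ℝ) ≤ r+1)]) ?_
    calc ‖-F (q s) - γ • p s‖ ≤ ‖-F (q s)‖ + ‖γ • p s‖ := norm_sub_le _ _
      _ = ‖F (q s)‖ + γ * ‖p s‖ := by
          rw [norm_neg, norm_smul, Real.norm_eq_abs, abs_of_pos hγ]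
      _ ≤ MF + γ * (r + 1) := by
          refine add_le_add (hMF _ (mem_closedBall_zero_iff.2 hqs)) ?_
          exact mul_le_mul_of_nonneg_left hps hγ.le
      _ ≤ L0 := by rw [hL0def]; nlinarith
  have hball : ∀ s ∈ Set.Icc (0:ℝ) t₀,
      q s ∈ Metric.closedBall (0 : EuclideanSpace ℝ (Fin d)) (r+1) ∧
      (∀ i j, |DF (q s) i j| ≤ MD) ∧ ‖q s - q 0‖ ≤ L0 * s := by
    intro s hs
    have h1 := hstay s hs
    have hq1 : ‖q s - q 0‖ ≤ L0 * s := le_trans (norm_fst_le (g s - g 0)) h1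
    have h2 : L0 * s ≤ 1/2 := by
      calc L0 * s ≤ L0 * t₀ := mul_le_mul_of_nonneg_left hs.2 hL0pos.le
        _ ≤ 1/2 := hsmall
    have hqs : ‖q s‖ ≤ r + 1 := by
      calc ‖q s‖ = ‖q 0 + (q s - q 0)‖ := by rw [add_sub_cancel]
        _ ≤ ‖q 0‖ + ‖q s - q 0‖ := norm_add_le _ _
        _ ≤ r + (L0 * s) := add_le_add hq0r hq1
        _ ≤ r + 1 := add_le_add le_rfl (h2.trans (by norm_num))
    have hmem := mem_closedBall_zero_iff.2 hqs
    exact ⟨hmem, hDFbd _ hmem, hq1⟩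
  have hq0mem : q 0 ∈ Metric.closedBall (0 : EuclideanSpace ℝ (Fin d)) (r+1) :=
    mem_closedBall_zero_iff.2 (by linarith)
  -- polynomial form of Shat
  have hShat_poly : ∀ u : ℝ, Shat (q 0) u
      = u • Stmt17Aux.C1 + u^2 • Stmt17Aux.C2 γ + u^3 • Stmt17Aux.C3 γ (DF (q 0)) := by
    intro u; rw [hShat]; exact Stmt17Aux.poly_eq γ u (DF (q 0))
  have hShat0 : Shat (q 0) 0 = 0 := by rw [hShat_poly]; simp
  -- derivative of the polynomial part
  set Dt' : ℝ → Matrix (Fin d ⊕ Fin d) (Fin d ⊕ Fin d) ℝ := fun s =>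
    Stmt17Aux.C1 + (2*s) • Stmt17Aux.C2 γ + (3*s^2) • Stmt17Aux.C3 γ (DF (q 0)) with hDt'def
  -- error term
  set Err : ℝ → Matrix (Fin d ⊕ Fin d) (Fin d ⊕ Fin d) ℝ := fun s =>
    J + A (q s) * Shat (q 0) s + Shat (q 0) s * (A (q s))ᵀ - Dt' s
    with hErrdef
  have hErr_eq : ∀ s : ℝ, Err s
      = s^3 • Stmt17Aux.E0c γ (DF (q 0)) + Stmt17Aux.DeltaM γ s (DF (q s) - DF (q 0)) := by
    intro s
    rw [hErrdef]
    simp only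
    rw [hDt'def]
    simp only
    rw [hJ, hShat, hA]
    exact Stmt17Aux.key_eq γ s (DF (q 0)) (DF (q s))
  -- the Gronwall function
  set f : ℝ → EuclideanSpace ℝ ((Fin d ⊕ Fin d) × (Fin d ⊕ Fin d)) :=
    fun s => Stmt17Aux.vecE (S s - Shat (q 0) s) with hfdef
  set f' : ℝ → EuclideanSpace ℝ ((Fin d ⊕ Fin d) × (Fin d ⊕ Fin d)) :=
    fun s => Stmt17Aux.vecE (A (q s) * (S s - Shat (q 0) s)
      + (S s - Shat (q 0) s) * (A (q s))ᵀ + Err s) with hf'def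
  have hfderiv : ∀ s, HasDerivAt f (f' s) s := by
    intro s
    have hid : J + A (q s) * S s + S s * (A (q s))ᵀ - Dt' s
        = A (q s) * (S s - Shat (q 0) s) + (S s - Shat (q 0) s) * (A (q s))ᵀ + Err s := by
      rw [hErrdef]
      simp only [Matrix.mul_sub, Matrix.sub_mul]
      abel
    have hent : ∀ (ij : (Fin d ⊕ Fin d) × (Fin d ⊕ Fin d)),
        HasDerivAt (fun u => (S u - Shat (q 0) u) ij.1 ij.2)
          ((A (q s) * (S s - Shat (q 0) s) + (S s - Shat (q 0) s) * (A (q s))ᵀ + Err s)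
            ij.1 ij.2) s := by
      intro ij
      have hSh : HasDerivAt (fun u => Shat (q 0) u ij.1 ij.2) (Dt' s ij.1 ij.2) s := by
        have heq : (fun u => Shat (q 0) u ij.1 ij.2) = fun u =>
            u * (Stmt17Aux.C1 : Matrix (Fin d ⊕ Fin d) (Fin d ⊕ Fin d) ℝ) ij.1 ij.2
              + u^2 * Stmt17Aux.C2 γ ij.1 ij.2
              + u^3 * Stmt17Aux.C3 γ (DF (q 0)) ij.1 ij.2 := by
          funext u
          rw [hShat_poly u]
          simp [Matrix.add_apply, Matrix.smul_apply, smul_eq_mul]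
        rw [heq]
        have hder : HasDerivAt (fun u : ℝ =>
            u * (Stmt17Aux.C1 : Matrix (Fin d ⊕ Fin d) (Fin d ⊕ Fin d) ℝ) ij.1 ij.2
              + u^2 * Stmt17Aux.C2 γ ij.1 ij.2
              + u^3 * Stmt17Aux.C3 γ (DF (q 0)) ij.1 ij.2)
            (1 * (Stmt17Aux.C1 : Matrix (Fin d ⊕ Fin d) (Fin d ⊕ Fin d) ℝ) ij.1 ij.2
              + ((2:ℕ) * s^1) * Stmt17Aux.C2 γ ij.1 ij.2
              + ((3:ℕ) * s^2) * Stmt17Aux.C3 γ (DF (q 0)) ij.1 ij.2) s :=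
          (((hasDerivAt_id s).mul_const _).add
            ((hasDerivAt_pow 2 s).mul_const _)).add
            ((hasDerivAt_pow 3 s).mul_const _)
        convert hder using 1
        rw [hDt'def]
        simp only [Matrix.add_apply, Matrix.smul_apply, smul_eq_mul]
        push_cast
        ring
      have h1 : HasDerivAt (fun u => (S u - Shat (q 0) u) ij.1 ij.2)
          ((J + A (q s) * S s + S s * (A (q s))ᵀ) ij.1 ij.2 - Dt' s ij.1 ij.2) s :=
        (hS s ij.1 ij.2).sub hSh
      have h2 : (J + A (q s) * S s + S s * (A (q s))ᵀ) ij.1 ij.2 - Dt' s ij.1 ij.2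
          = (A (q s) * (S s - Shat (q 0) s) + (S s - Shat (q 0) s) * (A (q s))ᵀ + Err s)
            ij.1 ij.2 := by
        rw [← Matrix.sub_apply, hid]
      rw [h2] at h1
      exact h1
    have hpi : HasDerivAt
        (fun u => (fun ij : (Fin d ⊕ Fin d) × (Fin d ⊕ Fin d) =>
          (S u - Shat (q 0) u) ij.1 ij.2))
        (fun ij => (A (q s) * (S s - Shat (q 0) s) + (S s - Shat (q 0) s) * (A (q s))ᵀ
          + Err s) ij.1 ij.2) s := hasDerivAt_pi.2 hent
    exact ((PiLp.continuousLinearEquiv 2 ℝ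
      (fun _ : (Fin d ⊕ Fin d) × (Fin d ⊕ Fin d) => ℝ)).symm.toContinuousLinearMap.hasFDerivAt.comp_hasDerivAt s hpi)
  -- bound on the error
  have hErrbd : ∀ s ∈ Set.Icc (0:ℝ) t₀, ‖Stmt17Aux.vecE (Err s)‖ ≤ Kε * s^3 := by
    intro s hs
    have hs1 : s ≤ 1 := hs.2.trans ht₀le1
    have hball' := hball s hs
    have hE0bd : ∀ i j, |Stmt17Aux.E0c γ (DF (q 0)) i j| ≤ K1 := by
      intro i j
      rw [hK1def]
      exact Stmt17Aux.E0c_entry_le hγ.le hMD0 _ (hDFbd _ hq0mem) i j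
    have hΔbd : ∀ i j, |(DF (q s) - DF (q 0)) i j| ≤ (LD * L0) * s := by
      intro i j
      rw [Matrix.sub_apply]
      calc |DF (q s) i j - DF (q 0) i j| ≤ LD * ‖q s - q 0‖ :=
            hDFlip _ hball'.1 _ hq0mem i j
        _ ≤ LD * (L0 * s) := mul_le_mul_of_nonneg_left hball'.2.2 hLD0
        _ = (LD * L0) * s := by ring
    have hΔMbd : ∀ i j, |Stmt17Aux.DeltaM γ s (DF (q s) - DF (q 0)) i j| ≤ K2 * s^3 := by
      intro i j
      rw [hK2def]
      exact Stmt17Aux.DeltaM_entry_le hγ.le hs.1 hs1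
        (mul_nonneg hLD0 hL0pos.le) _ hΔbd i j
    calc ‖Stmt17Aux.vecE (Err s)‖
        = ‖Stmt17Aux.vecE (s^3 • Stmt17Aux.E0c γ (DF (q 0)))
            + Stmt17Aux.vecE (Stmt17Aux.DeltaM γ s (DF (q s) - DF (q 0)))‖ := by
          rw [hErr_eq s, Stmt17Aux.vecE_add]
      _ ≤ ‖Stmt17Aux.vecE (s^3 • Stmt17Aux.E0c γ (DF (q 0)))‖
            + ‖Stmt17Aux.vecE (Stmt17Aux.DeltaM γ s (DF (q s) - DF (q 0)))‖ := norm_add_le _ _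
      _ ≤ s^3 * (N * K1) + N * (K2 * s^3) := by
          refine add_le_add ?_ ?_
          · rw [Stmt17Aux.vecE_smul, norm_smul, Real.norm_eq_abs,
              abs_of_nonneg (pow_nonneg hs.1 3)]
            refine mul_le_mul_of_nonneg_left ?_ (pow_nonneg hs.1 3)
            have := Stmt17Aux.vecE_norm_le (Stmt17Aux.E0c γ (DF (q 0))) hK1pos.le hE0bd
            rwa [hNcard] at this
          · have := Stmt17Aux.vecE_norm_le (Stmt17Aux.DeltaM γ s (DF (q s) - DF (q 0)))
              (mul_nonneg hK2pos.le (pow_nonneg hs.1 3)) hΔMbd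
            rwa [hNcard] at this
      _ = Kε * s^3 := by rw [hKεdef]; ring
  -- bound on the drift coefficient
  have hAbd : ∀ s ∈ Set.Icc (0:ℝ) t₀, ∀ i j, |A (q s) i j| ≤ K4 := by
    intro s hs i j
    rw [hA, hK4def]
    exact Stmt17Aux.A_entry_le hγ.le hMD0 _ ((hball s hs).2.1) i j
  -- Gronwall
  have htmem : ∀ s ∈ Set.Ico (0:ℝ) t, s ∈ Set.Icc (0:ℝ) t₀ :=
    fun s hs => ⟨hs.1, hs.2.le.trans ht'⟩
  have hbound : ∀ s ∈ Set.Ico (0:ℝ) t, ‖f' s‖ ≤ KG * ‖f s‖ + Kε * t^3 := by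
    intro s hs
    have hsIcc := htmem s hs
    have hR := fun (M : Matrix (Fin d ⊕ Fin d) (Fin d ⊕ Fin d) ℝ) => M
    have hA1 : ‖Stmt17Aux.vecE (A (q s) * (S s - Shat (q 0) s))‖
        ≤ N * K4 * ‖Stmt17Aux.vecE (S s - Shat (q 0) s)‖ := by
      have := Stmt17Aux.vecE_norm_mul_le (A (q s)) (S s - Shat (q 0) s)
        hK4pos.le (hAbd s hsIcc)
      rwa [hNcard] at this
    have hA2 : ‖Stmt17Aux.vecE ((S s - Shat (q 0) s) * (A (q s))ᵀ)‖
        ≤ N * K4 * ‖Stmt17Aux.vecE (S s - Shat (q 0) s)‖ := by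
      have h1 : ((S s - Shat (q 0) s) * (A (q s))ᵀ)ᵀ = A (q s) * (S s - Shat (q 0) s)ᵀ := by
        rw [Matrix.transpose_mul, Matrix.transpose_transpose]
      have h2 := Stmt17Aux.vecE_norm_mul_le (A (q s)) ((S s - Shat (q 0) s)ᵀ)
        hK4pos.le (hAbd s hsIcc)
      rw [hNcard] at h2
      calc ‖Stmt17Aux.vecE ((S s - Shat (q 0) s) * (A (q s))ᵀ)‖
          = ‖Stmt17Aux.vecE (((S s - Shat (q 0) s) * (A (q s))ᵀ)ᵀ)‖ :=
            (Stmt17Aux.vecE_norm_transpose _).symm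
        _ = ‖Stmt17Aux.vecE (A (q s) * (S s - Shat (q 0) s)ᵀ)‖ := by rw [h1]
        _ ≤ N * K4 * ‖Stmt17Aux.vecE ((S s - Shat (q 0) s)ᵀ)‖ := h2
        _ = N * K4 * ‖Stmt17Aux.vecE (S s - Shat (q 0) s)‖ := by
            rw [Stmt17Aux.vecE_norm_transpose]
    have hs3t3 : Kε * s^3 ≤ Kε * t^3 := by
      refine mul_le_mul_of_nonneg_left ?_ hKεpos.le
      exact pow_le_pow_left₀ hs.1 hs.2.le 3
    calc ‖f' s‖ = ‖Stmt17Aux.vecE (A (q s) * (S s - Shat (q 0) s))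
          + Stmt17Aux.vecE ((S s - Shat (q 0) s) * (A (q s))ᵀ)
          + Stmt17Aux.vecE (Err s)‖ := by
          rw [hf'def]; simp only
          rw [Stmt17Aux.vecE_add, Stmt17Aux.vecE_add]
      _ ≤ ‖Stmt17Aux.vecE (A (q s) * (S s - Shat (q 0) s))‖
          + ‖Stmt17Aux.vecE ((S s - Shat (q 0) s) * (A (q s))ᵀ)‖
          + ‖Stmt17Aux.vecE (Err s)‖ := norm_add₃_le
      _ ≤ N * K4 * ‖f s‖ + N * K4 * ‖f s‖ + Kε * s^3 := by
          refine add_le_add (add_le_add hA1 hA2) (hErrbd s hsIcc)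
      _ ≤ KG * ‖f s‖ + Kε * t^3 := by
          rw [hKGdef]
          have := hs3t3
          nlinarith [norm_nonneg (f s)]
  have hf0 : ‖f 0‖ ≤ 0 := by
    rw [hfdef]
    simp only [hS0, hShat0, sub_zero]
    rw [Stmt17Aux.vecE_zero]
    simp
  have hgron := Stmt17Aux.gronwall_zero hKGpos (by positivity : (0:ℝ) ≤ Kε * t^3) ht.le
    hfderiv hf0 hbound
  have htrace : ((S t - Shat (q 0) t) * (S t - Shat (q 0) t)ᵀ).trace
      = ∑ i, ∑ j, ((S t - Shat (q 0) t) i j)^2 := by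
    simp [Matrix.trace, Matrix.diag, Matrix.mul_apply, sq]
  have hconv : Real.sqrt (((S t - Shat (q 0) t) * (S t - Shat (q 0) t)ᵀ).trace)
      = ‖Stmt17Aux.vecE (S t - Shat (q 0) t)‖ := by
    rw [htrace, Stmt17Aux.vecE_norm]
  rw [hconv]
  have hexp : Real.exp (KG * t) ≤ Real.exp KG := by
    rw [Real.exp_le_exp]
    calc KG * t ≤ KG * 1 := mul_le_mul_of_nonneg_left (ht'.trans ht₀le1) hKGpos.le
      _ = KG := mul_one KG
  have hft : ‖Stmt17Aux.vecE (S t - Shat (q 0) t)‖ = ‖f t‖ := by rw [hfdef]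
  rw [hft]
  calc ‖f t‖ ≤ Kε * t^3 * t * Real.exp (KG * t) := hgron
    _ ≤ Kε * Real.exp KG * t^4 := by
        have h1 : Kε * t^3 * t = Kε * t^4 := by ring
        rw [h1]
        calc Kε * t^4 * Real.exp (KG * t) ≤ Kε * t^4 * Real.exp KG := by
              refine mul_le_mul_of_nonneg_left hexp (by positivity)
          _ = Kε * Real.exp KG * t^4 := by ring
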